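/- (Gilbert–Varshamov bound) For integers n ≥ k ≥ 1 and d ≥ 2, if 2^{n−k} > Σ_{i=0}^{d−2} C(n−1, i), then there exists a binary linear code of length n and dimension k (a k-dimensional subspace of F_2ⁿ) whose minimum Hamming weight over nonzero codewords is at least d. -/

import Mathlib

/-!
Build the parity-check matrix column by column: as long as fewer than `2 ^ (n - k)` vectors are
sums of at most `d - 2` earlier columns, there is a new column that is not such a sum, so no
nonempty set of at most `d - 1` columns sums to zero. Over `𝔽₂` a codeword is the indicator of a
set of columns summing to zero, hence every nonzero codeword of the kernel has weight at least
`d`, and the kernel has dimension at least `n - (n - k) = k`.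
-/

open Finset Module

theorem card_filter_powerset_card_lt_le {α : Type*} [DecidableEq α] (s : Finset α) (r : ℕ) :
    #{T ∈ s.powerset | #T < r} ≤ ∑ m ∈ range r, (#s).choose m :=
  calc #{T ∈ s.powerset | #T < r}
      ≤ #((range r).biUnion (powersetCard · s)) := by
        refine card_le_card fun T hT => ?_
        simp only [mem_filter, mem_powerset] at hT
        simp [hT]
    _ ≤ ∑ m ∈ range r, #(powersetCard m s) := card_biUnion_le
    _ = ∑ m ∈ range r, (#s).choose m := by simp only [card_powersetCard]

section SubsetSums

variable {ι V : Type*} [DecidableEq ι] [AddCommGroup V] [Fintype V] [DecidableEq V]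

theorem exists_update_sum_ne_zero {c : ι → V} {s : Finset ι} {a : ι} {r : ℕ}
    (hc : ∀ S ⊆ s, S.Nonempty → #S ≤ r → ∑ i ∈ S, c i ≠ 0)
    (hV : ∑ m ∈ range r, (#s).choose m < Fintype.card V) :
    ∃ v, ∀ S ⊆ insert a s, S.Nonempty → #S ≤ r → ∑ i ∈ S, Function.update c a v i ≠ 0 := by
  set bad := {T ∈ s.powerset | #T < r}.image fun T => -∑ i ∈ T, c i
  obtain ⟨v, -, hv⟩ := exists_mem_notMem_of_card_lt_card (s := bad) (t := univ)
    ((card_image_le.trans (card_filter_powerset_card_lt_le s r)).trans_lt (by simpa using hV))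
  refine ⟨v, fun S hS hne hr => ?_⟩
  by_cases haS : a ∈ S
  · rw [← add_sum_erase S _ haS, Function.update_self, sum_update_of_notMem (notMem_erase a S)]
    intro hsum
    have hcard := card_erase_of_mem haS
    have hpos := hne.card_pos
    refine hv (mem_image.2 ⟨S.erase a, ?_, neg_eq_of_add_eq_zero_left hsum⟩)
    simp only [mem_filter, mem_powerset]
    exact ⟨subset_insert_iff.1 hS, by omega⟩
  · rw [sum_update_of_notMem haS]
    exact hc S ((subset_insert_iff_of_notMem haS).1 hS) hne hr

theorem exists_sum_ne_zero_of_sum_choose_lt_card (s : Finset ι) (r : ℕ)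
    (hV : ∑ m ∈ range r, (#s - 1).choose m < Fintype.card V) :
    ∃ c : ι → V, ∀ S ⊆ s, S.Nonempty → #S ≤ r → ∑ i ∈ S, c i ≠ 0 := by
  induction s using Finset.induction_on with
  | empty => exact ⟨0, fun S hS hne _ => absurd (subset_empty.1 hS) hne.ne_empty⟩
  | insert a s ha ih =>
    rw [card_insert_of_notMem ha, Nat.add_sub_cancel] at hV
    obtain ⟨c, hc⟩ :=
      ih ((sum_le_sum fun m _ => Nat.choose_le_choose m (Nat.sub_le _ 1)).trans_lt hV)
    obtain ⟨v, hv⟩ := exists_update_sum_ne_zero hc hV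
    exact ⟨_, hv⟩

end SubsetSums

theorem linearCombination_eq_sum_support {ι V : Type*} [Fintype ι] [AddCommGroup V]
    [Module (ZMod 2) V] (c : ι → V) (x : ι → ZMod 2) :
    Fintype.linearCombination (ZMod 2) c x = ∑ i ∈ {i | x i ≠ 0}, c i := by
  rw [Fintype.linearCombination_apply, sum_filter]
  refine sum_congr rfl fun i _ => ?_
  rcases (by decide : ∀ t : ZMod 2, t = 0 ∨ t = 1) (x i) with hi | hi <;> simp [hi]

theorem lt_hammingNorm_of_linearCombination_eq_zero {ι V : Type*} [Fintype ι] [AddCommGroup V]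
    [Module (ZMod 2) V] {c : ι → V} {r : ℕ}
    (hc : ∀ S : Finset ι, S.Nonempty → #S ≤ r → ∑ i ∈ S, c i ≠ 0) {x : ι → ZMod 2}
    (hx : Fintype.linearCombination (ZMod 2) c x = 0) (hx0 : x ≠ 0) : r < hammingNorm x := by
  by_contra! hle
  exact hc _ (card_pos.1 (hammingNorm_pos_iff.2 hx0)) hle
    ((linearCombination_eq_sum_support c x).symm.trans hx)

theorem Submodule.exists_le_finrank_eq {K M : Type*} [DivisionRing K]
    [AddCommGroup M] [Module K M] {W : Submodule K M} {k : ℕ} (hk : k ≤ finrank K W) :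
    ∃ B ≤ W, finrank K B = k := by
  obtain ⟨g, hg⟩ := exists_linearIndependent_of_le_finrank hk
  refine ⟨span K (Set.range (W.subtype ∘ g)), span_le.2 ?_, ?_⟩
  · rintro _ ⟨i, rfl⟩
    exact (g i).2
  · rw [finrank_span_eq_card (hg.map' W.subtype W.ker_subtype), Fintype.card_fin]

theorem stmt_12_general (n k d : ℕ) (hkn : k ≤ n)
    (h : ∑ i ∈ Finset.range (d - 1), (n - 1).choose i < 2 ^ (n - k)) :
    ∃ B : Submodule (ZMod 2) (Fin n → ZMod 2),
      Module.finrank (ZMod 2) B = k ∧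
      ∀ b ∈ B, b ≠ 0 → d ≤ hammingNorm b := by
  obtain ⟨c, hc⟩ := exists_sum_ne_zero_of_sum_choose_lt_card (V := Fin (n - k) → ZMod 2)
    (univ : Finset (Fin n)) (d - 1) (by simpa using h)
  set H := Fintype.linearCombination (ZMod 2) c
  have hker : k ≤ finrank (ZMod 2) (LinearMap.ker H) := by
    have hsum := H.finrank_range_add_finrank_ker
    have hrange := (LinearMap.range H).finrank_le
    simp only [finrank_fin_fun] at hsum hrange
    omega
  obtain ⟨B, hB, hBk⟩ := Submodule.exists_le_finrank_eq hker
  refine ⟨B, hBk, fun b hb hb0 => ?_⟩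
  have := lt_hammingNorm_of_linearCombination_eq_zero (fun S => hc S (subset_univ S)) (hB hb) hb0
  omega

theorem stmt_12 (n k d : ℕ) (hk : 1 ≤ k) (hkn : k ≤ n) (hd : 2 ≤ d)
    (h : ∑ i ∈ Finset.range (d - 1), (n - 1).choose i < 2 ^ (n - k)) :
    ∃ B : Submodule (ZMod 2) (Fin n → ZMod 2),
      Module.finrank (ZMod 2) B = k ∧
      ∀ b ∈ B, b ≠ 0 → d ≤ hammingNorm b :=
  stmt_12_general n k d hkn h
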